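/- arXiv:1907.06456 — 6 statements merged into one kernel-verified Lean document; each statement's English description precedes it below -/
import Mathlib

section
/- Let q = p^e be a prime power, F a field containing 𝔽_q, and σ : F((z)) → F((z)) the ring endomorphism of the field of formal Laurent series that fixes z and raises each coefficient to the q-th power. A matrix h ∈ GL₂(F((z))) satisfies h·diag(z,1) = diag(z,1)·σ(h) if and only if h is a diagonal matrix both of whose diagonal entries are invertible Laurent series fixed by σ (equivalently, invertible Laurent series all of whose coefficients lie in the image of 𝔽_q in F). -/
/-!
Comparing entries, `h · diag(z, 1) = diag(z, 1) · σ(h)` says `h₀₀ z = z σ(h₀₀)`, `h₁₁ = σ(h₁₁)`,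
`h₀₁ = z σ(h₀₁)` and `σ(h₁₀) = z h₁₀`. Since `σ` raises coefficients to the `q`-th power it
preserves the order of a Laurent series, whereas multiplying by `z` raises the order by one; so
the two off-diagonal equations force `h₀₁ = h₁₀ = 0`. Then `h` is diagonal and invertible, so
its diagonal entries are units.
-/

open HahnSeries

namespace LaurentSeries

variable {R : Type*} [Semiring R] {q : ℕ} {f g : LaurentSeries R}

theorem eq_zero_of_eq_single_one_mul_of_coeff_eq_pow (hq : q ≠ 0)
    (hg : ∀ n, g.coeff n = f.coeff n ^ q) (h : f = single 1 1 * g) : f = 0 := by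
  by_contra hf
  have hbelow : f.coeff (f.order - 1) = 0 := coeff_eq_zero_of_lt_order (by omega)
  apply coeff_order_eq_zero.not.mpr hf
  rw [h, coeff_single_mul, one_mul, hg, ← h, hbelow, zero_pow hq]

theorem eq_zero_of_single_one_mul_eq_of_coeff_eq_pow [NoZeroDivisors R]
    (hg : ∀ n, g.coeff n = f.coeff n ^ q) (h : single 1 1 * f = g) : f = 0 := by
  by_contra hf
  have hbelow : f.coeff (f.order - 1) = 0 := coeff_eq_zero_of_lt_order (by omega)
  apply pow_ne_zero q (coeff_order_eq_zero.not.mpr hf)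
  rw [← hg, ← h, coeff_single_mul, one_mul, hbelow]

end LaurentSeries

theorem Matrix.mul_diagonal_eq_diagonal_mul_map_iff {n α : Type*} [Fintype n] [DecidableEq n]
    [NonUnitalNonAssocSemiring α] (M : Matrix n n α) (d : n → α) (f : α → α) :
    M * diagonal d = diagonal d * M.map f ↔ ∀ i j, M i j * d j = d i * f (M i j) := by
  simp [← Matrix.ext_iff, Matrix.mul_diagonal, Matrix.diagonal_mul]

theorem Matrix.IsDiag.isUnit_apply_self {n α : Type*} [Fintype n] [DecidableEq n] [CommRing α]
    {M : Matrix n n α} (hdiag : M.IsDiag) (hM : IsUnit M) (i : n) : IsUnit (M i i) := by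
  rw [← hdiag.diagonal_diag, isUnit_diagonal] at hM
  exact hM.apply i

theorem stmt_0_general {q : ℕ}
    {F : Type*} [Field F]
    (σ : LaurentSeries F →+* LaurentSeries F)
    (hσ : ∀ (f : LaurentSeries F) (n : ℤ), (σ f).coeff n = f.coeff n ^ q)
    (h : (Matrix (Fin 2) (Fin 2) (LaurentSeries F))ˣ) :
    (↑h : Matrix (Fin 2) (Fin 2) (LaurentSeries F)) *
        Matrix.diagonal ![(HahnSeries.single (1 : ℤ) (1 : F) : LaurentSeries F), 1] =
      Matrix.diagonal ![(HahnSeries.single (1 : ℤ) (1 : F) : LaurentSeries F), 1] *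
        ((↑h : Matrix (Fin 2) (Fin 2) (LaurentSeries F)).map ⇑σ) ↔
      ((∀ i j : Fin 2, i ≠ j → (↑h : Matrix (Fin 2) (Fin 2) (LaurentSeries F)) i j = 0) ∧
        ∀ i : Fin 2, IsUnit ((↑h : Matrix (Fin 2) (Fin 2) (LaurentSeries F)) i i) ∧
          σ ((↑h : Matrix (Fin 2) (Fin 2) (LaurentSeries F)) i i) =
            (↑h : Matrix (Fin 2) (Fin 2) (LaurentSeries F)) i i) := by
  -- `σ 0 = 0` while `0 ^ 0 = 1`
  have hq : q ≠ 0 := by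
    rintro rfl
    simpa using hσ 0 0
  have hz : (single 1 1 : LaurentSeries F) ≠ 0 := single_ne_zero one_ne_zero
  rw [Matrix.mul_diagonal_eq_diagonal_mul_map_iff]
  constructor
  · intro H
    have hdiag : ∀ i j : Fin 2, i ≠ j → (h : Matrix (Fin 2) (Fin 2) (LaurentSeries F)) i j = 0 := by
      intro i j hij
      fin_cases i <;> fin_cases j <;> simp only [ne_eq, not_true_eq_false] at hij
      · exact LaurentSeries.eq_zero_of_eq_single_one_mul_of_coeff_eq_pow hq (hσ _)
          (by simpa using H 0 1)
      · exact LaurentSeries.eq_zero_of_single_one_mul_eq_of_coeff_eq_pow (hσ _)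
          (by simpa [mul_comm] using H 1 0)
    refine ⟨hdiag, fun i ↦ ⟨Matrix.IsDiag.isUnit_apply_self hdiag h.isUnit i, ?_⟩⟩
    fin_cases i
    · exact (mul_left_cancel₀ hz (by simpa [mul_comm] using H 0 0)).symm
    · simpa using (H 1 1).symm
  · rintro ⟨hdiag, hfix⟩ i j
    by_cases hij : i = j
    · subst hij
      rw [(hfix i).2, mul_comm]
    · rw [hdiag i j hij, map_zero, zero_mul, mul_zero]

/-- For `q = p^e` a prime power, `F` a field containing `𝔽_q`, and
`σ : F((z)) → F((z))` the ring endomorphism fixing `z` and raising each coefficient to the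
`q`-th power, a matrix `h ∈ GL₂(F((z)))` satisfies `h·diag(z,1) = diag(z,1)·σ(h)` iff `h` is
diagonal with both diagonal entries invertible Laurent series fixed by `σ`. -/
theorem stmt_0 {p e q : ℕ} [Fact p.Prime] (hq : q = p ^ e) (he : 0 < e)
    {F : Type*} [Field F] [Algebra (GaloisField p e) F]
    (σ : LaurentSeries F →+* LaurentSeries F)
    (hσ : ∀ (f : LaurentSeries F) (n : ℤ), (σ f).coeff n = f.coeff n ^ q)
    (h : (Matrix (Fin 2) (Fin 2) (LaurentSeries F))ˣ) :
    (↑h : Matrix (Fin 2) (Fin 2) (LaurentSeries F)) *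
        Matrix.diagonal ![(HahnSeries.single (1 : ℤ) (1 : F) : LaurentSeries F), 1] =
      Matrix.diagonal ![(HahnSeries.single (1 : ℤ) (1 : F) : LaurentSeries F), 1] *
        ((↑h : Matrix (Fin 2) (Fin 2) (LaurentSeries F)).map ⇑σ) ↔
      ((∀ i j : Fin 2, i ≠ j → (↑h : Matrix (Fin 2) (Fin 2) (LaurentSeries F)) i j = 0) ∧
        ∀ i : Fin 2, IsUnit ((↑h : Matrix (Fin 2) (Fin 2) (LaurentSeries F)) i i) ∧
          σ ((↑h : Matrix (Fin 2) (Fin 2) (LaurentSeries F)) i i) =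
            (↑h : Matrix (Fin 2) (Fin 2) (LaurentSeries F)) i i) :=
  stmt_0_general σ hσ h
end

section
/- Let q = p^e be a prime power and A an integral domain containing 𝔽_q. Suppose g ∈ GL₂(A((z))) satisfies: (i) all entries of g⁻¹·diag(z,1)·σ(g) lie in A[[z]]; and (ii) det(g⁻¹·diag(z,1)·σ(g)) = z·u for some unit u of A[[z]]. Then there exist integers m, n such that diag(z^{-m}, z^{-n})·g ∈ GL₂(A[[z]]). -/
/-!
Let `m i` be the lowest order of an entry in the `i`-th row of `g`. Then
`P = diag(z^{-m 0}, z^{-m 1}) g` has entries in `A[[z]]`, and its reduction `c = P mod z` has no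
zero row. As `σ` fixes monomials, `P τ = diag(z, 1) σ(P)`, which modulo `z` reads
`c t = diag(0, 1) c^(q)` with `c^(q)` the entrywise `q`-th power. Multiplying by `adj c` shows
that `det c = 0` would force `c 0 k * (c 1 j)^q = 0` for all `j, k`, hence a zero row. So `det P`
is a unit of `A((z))` with nonzero constant term; since leading coefficients are multiplicative
over a domain, that constant term is a unit of `A`, and `P ∈ GL₂(A[[z]])`.
-/

open HahnSeries PowerSeries LaurentSeries Matrix

namespace HahnSeries

theorem exists_min_order {Γ R ι : Type*} [LinearOrder Γ] [Zero R] [Finite ι]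
    {f : ι → HahnSeries Γ R} (hf : f ≠ 0) :
    ∃ m : Γ, (∀ i n, n < m → (f i).coeff n = 0) ∧ ∃ i, (f i).coeff m ≠ 0 := by
  obtain ⟨i, hi⟩ := Function.ne_iff.mp hf
  have : Nonempty ι := ⟨i⟩
  obtain ⟨i₀, hmin⟩ := Finite.exists_min fun i => (f i).orderTop
  obtain ⟨m, hm⟩ := WithTop.ne_top_iff_exists.mp
    (ne_top_of_le_ne_top (orderTop_ne_top.mpr hi) (hmin i))
  refine ⟨m, fun i n hn => coeff_eq_zero_of_lt_orderTop ?_, i₀, coeff_orderTop_ne hm.symm⟩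
  exact (hm ▸ WithTop.coe_lt_coe.mpr hn).trans_le (hmin i)

theorem isUnit_single_one {Γ R : Type*} [AddCommGroup Γ] [PartialOrder Γ]
    [IsOrderedAddMonoid Γ] [CommSemiring R] (a : Γ) : IsUnit (single a (1 : R)) :=
  IsUnit.of_mul_eq_one (single (-a) 1)
    (by rw [single_mul_single, add_neg_cancel, mul_one, single_zero_one])

end HahnSeries

namespace PowerSeries

noncomputable def powCoeffs {R : Type*} [Semiring R] (q : ℕ) (F : PowerSeries R) :
    PowerSeries R :=
  mk fun n => coeff n F ^ q

theorem constantCoeff_comp_powCoeffs {R : Type*} [Semiring R] (q : ℕ) :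
    ⇑constantCoeff ∘ powCoeffs q = (· ^ q) ∘ ⇑(constantCoeff (R := R)) := by
  funext F
  simp only [Function.comp_apply, ← coeff_zero_eq_constantCoeff_apply, powCoeffs, coeff_mk]

end PowerSeries

namespace LaurentSeries

theorem exists_ofPowerSeries_eq {R : Type*} [Semiring R] {f : LaurentSeries R}
    (hf : ∀ n < 0, f.coeff n = 0) : ∃ F : PowerSeries R, ofPowerSeries ℤ R F = f := by
  refine ⟨mk fun n => f.coeff n, ?_⟩
  ext n
  rw [coeff_coe]
  split_ifs with hn
  · exact (hf n hn).symm
  · rw [coeff_mk, Int.natAbs_of_nonneg (not_lt.mp hn)]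

theorem coeff_zero_ofPowerSeries {R : Type*} [Semiring R] (F : PowerSeries R) :
    (ofPowerSeries ℤ R F).coeff 0 = constantCoeff F := by
  simpa using ofPowerSeries_apply_coeff F 0

theorem isUnit_of_isUnit_ofPowerSeries {R : Type*} [CommRing R] [NoZeroDivisors R]
    {F : PowerSeries R} (hF : IsUnit (ofPowerSeries ℤ R F)) (h0 : constantCoeff F ≠ 0) :
    IsUnit F := by
  have h0' : (ofPowerSeries ℤ R F).coeff 0 ≠ 0 := by rwa [coeff_zero_ofPowerSeries]
  have hord : (ofPowerSeries ℤ R F).order = 0 := by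
    refine le_antisymm (order_le_of_coeff_ne_zero h0') (not_lt.mp fun hlt => ?_)
    exact ne_zero_of_coeff_ne_zero h0' (coeff_order_eq_zero.mp (by rw [coeff_coe, if_pos hlt]))
  obtain ⟨y, hy⟩ := hF.exists_right_inv
  have hlead := congrArg leadingCoeff hy
  rw [leadingCoeff_mul, leadingCoeff_one, leadingCoeff_eq, hord, coeff_zero_ofPowerSeries] at hlead
  exact isUnit_iff_constantCoeff.mpr (IsUnit.of_mul_eq_one _ hlead)

section CoeffPow

variable {R : Type*} [Semiring R] {q : ℕ} {σ : LaurentSeries R →+* LaurentSeries R}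

theorem coeff_map_eq_zero_of_coeff_pow (hσ : ∀ f n, (σ f).coeff n = f.coeff n ^ q)
    {f : LaurentSeries R} {n : ℤ} (h : f.coeff n = 0) : (σ f).coeff n = 0 := by
  simpa [hσ, h] using (hσ 0 n).symm

theorem map_single_one_of_coeff_pow (hσ : ∀ f n, (σ f).coeff n = f.coeff n ^ q) (a : ℤ) :
    σ (single a 1) = single a 1 := by
  ext n
  by_cases hn : n = a
  · simp [hσ, hn]
  · rw [coeff_map_eq_zero_of_coeff_pow hσ] <;> simp [hn]

theorem map_ofPowerSeries_of_coeff_pow (hσ : ∀ f n, (σ f).coeff n = f.coeff n ^ q)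
    (F : PowerSeries R) : σ (ofPowerSeries ℤ R F) = ofPowerSeries ℤ R (F.powCoeffs q) := by
  ext n
  rw [coeff_coe]
  split_ifs with hn
  · exact coeff_map_eq_zero_of_coeff_pow hσ (by rw [coeff_coe, if_pos hn])
  · rw [hσ, coeff_coe, if_neg hn, powCoeffs, coeff_mk]

end CoeffPow

end LaurentSeries

namespace Matrix

theorem exists_map_ofPowerSeries_eq {R m n : Type*} [Semiring R]
    {N : Matrix m n (LaurentSeries R)} (hN : ∀ i j, ∀ k < 0, (N i j).coeff k = 0) :
    ∃ P : Matrix m n (PowerSeries R), P.map (ofPowerSeries ℤ R) = N := by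
  choose P hP using fun i j => exists_ofPowerSeries_eq (hN i j)
  exact ⟨of P, ext fun i j => hP i j⟩

theorem constantCoeff_of_map_ofPowerSeries_eq {R n : Type*} [Semiring R] [Fintype n]
    [DecidableEq n] {P : Matrix n n (PowerSeries R)} {M : Matrix n n (LaurentSeries R)}
    {d : n → ℤ} (hP : P.map (ofPowerSeries ℤ R) = diagonal (fun i => HahnSeries.single (d i) 1) * M)
    (i j : n) : constantCoeff (P i j) = (M i j).coeff (-d i) := by
  have hPij := congrFun (congrFun hP i) j
  rw [map_apply] at hPij
  rw [← coeff_zero_ofPowerSeries, hPij, diagonal_mul, coeff_single_mul, one_mul, zero_sub]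

theorem mul_eq_diagonal_X_mul_map_powCoeffs {R : Type*} [CommSemiring R] {q : ℕ}
    {σ : LaurentSeries R →+* LaurentSeries R} (hσ : ∀ f n, (σ f).coeff n = f.coeff n ^ q)
    {M τ : Matrix (Fin 2) (Fin 2) (LaurentSeries R)}
    (hMτ : M * τ = diagonal ![HahnSeries.single 1 1, 1] * M.map σ) {d : Fin 2 → ℤ}
    {P T : Matrix (Fin 2) (Fin 2) (PowerSeries R)}
    (hP : P.map (ofPowerSeries ℤ R) = diagonal (fun i => HahnSeries.single (d i) 1) * M)
    (hT : T.map (ofPowerSeries ℤ R) = τ) :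
    P * T = diagonal ![X, 1] * P.map (powCoeffs q) := by
  have hPσ : (P.map (powCoeffs q)).map (ofPowerSeries ℤ R) =
      diagonal (fun i => HahnSeries.single (d i) 1) * M.map σ := by
    have hlift : ⇑(ofPowerSeries ℤ R) ∘ powCoeffs q = σ ∘ ofPowerSeries ℤ R :=
      funext fun F => (map_ofPowerSeries_of_coeff_pow hσ F).symm
    rw [map_map, hlift, ← map_map, hP, Matrix.map_mul, diagonal_map (map_zero σ)]
    simp only [map_single_one_of_coeff_pow hσ]
  apply map_injective (ofPowerSeries_injective (Γ := ℤ))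
  dsimp only
  rw [Matrix.map_mul, Matrix.map_mul, hP, hT, hPσ, Matrix.mul_assoc, hMτ, ← Matrix.mul_assoc,
    ← Matrix.mul_assoc, diagonal_map (map_zero _), diagonal_mul_diagonal, diagonal_mul_diagonal]
  congr 2
  ext i
  fin_cases i <;> simp [mul_comm]

theorem map_constantCoeff_mul_eq {R : Type*} [CommSemiring R] {q : ℕ}
    {P T : Matrix (Fin 2) (Fin 2) (PowerSeries R)}
    (h : P * T = diagonal ![X, 1] * P.map (powCoeffs q)) :
    P.map constantCoeff * T.map constantCoeff =
      diagonal ![0, 1] * (P.map constantCoeff).map (· ^ q) := by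
  have h₀ := congrArg (·.map constantCoeff) h
  have hX : (fun i => constantCoeff (![X, 1] i)) = ![(0 : R), 1] := by
    funext i
    fin_cases i <;> simp
  simp only [Matrix.map_mul, diagonal_map (map_zero _), map_map] at h₀
  rwa [hX, constantCoeff_comp_powCoeffs, ← map_map] at h₀

theorem det_ne_zero_of_mul_eq_diagonal_mul {R : Type*} [CommRing R] [IsDomain R]
    {c t : Matrix (Fin 2) (Fin 2) R} {q : ℕ} (h₀ : c 0 ≠ 0) (h₁ : c 1 ≠ 0)
    (h : c * t = diagonal ![0, 1] * c.map (· ^ q)) : c.det ≠ 0 := by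
  intro hdet
  have hadj := congrArg (adjugate c * ·) h
  rw [← Matrix.mul_assoc, adjugate_mul, hdet, zero_smul, Matrix.zero_mul] at hadj
  obtain ⟨k, hk⟩ := Function.ne_iff.mp h₀
  refine h₁ (funext fun j => ?_)
  have e₀ : c 0 1 * c 1 j ^ q = 0 := by
    simpa [adjugate_fin_two, mul_apply, Fin.sum_univ_two] using congrFun (congrFun hadj 0) j
  have e₁ : c 0 0 * c 1 j ^ q = 0 := by
    simpa [adjugate_fin_two, mul_apply, Fin.sum_univ_two] using congrFun (congrFun hadj 1) j
  fin_cases k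
  · exact pow_eq_zero_iff'.mp ((mul_eq_zero.mp e₁).resolve_left hk) |>.1
  · exact pow_eq_zero_iff'.mp ((mul_eq_zero.mp e₀).resolve_left hk) |>.1

end Matrix

theorem stmt_1_general {q : ℕ}
    {A : Type*} [CommRing A] [IsDomain A]
    (σ : LaurentSeries A →+* LaurentSeries A)
    (hσ : ∀ (f : LaurentSeries A) (n : ℤ), (σ f).coeff n = f.coeff n ^ q)
    (g : (Matrix (Fin 2) (Fin 2) (LaurentSeries A))ˣ)
    (τ : Matrix (Fin 2) (Fin 2) (LaurentSeries A))
    (hτ : τ = (↑g⁻¹ : Matrix (Fin 2) (Fin 2) (LaurentSeries A)) *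
        Matrix.diagonal ![(HahnSeries.single (1 : ℤ) (1 : A) : LaurentSeries A), 1] *
        ((↑g : Matrix (Fin 2) (Fin 2) (LaurentSeries A)).map ⇑σ))
    (hint : ∀ (i j : Fin 2) (n : ℤ), n < 0 → (τ i j).coeff n = 0) :
    ∃ m n : ℤ, ∃ G : (Matrix (Fin 2) (Fin 2) (PowerSeries A))ˣ,
      Matrix.diagonal ![(HahnSeries.single (-m) (1 : A) : LaurentSeries A),
          (HahnSeries.single (-n) (1 : A) : LaurentSeries A)] *
          (↑g : Matrix (Fin 2) (Fin 2) (LaurentSeries A)) =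
        (↑G : Matrix (Fin 2) (Fin 2) (PowerSeries A)).map ⇑(HahnSeries.ofPowerSeries ℤ A) := by
  set M : Matrix (Fin 2) (Fin 2) (LaurentSeries A) := ↑g with hM
  have hdet : IsUnit M.det := (isUnit_iff_isUnit_det M).mp g.isUnit
  have hMτ : M * τ = diagonal ![HahnSeries.single 1 1, 1] * M.map σ := by
    rw [hτ, ← Matrix.mul_assoc, ← Matrix.mul_assoc, hM, g.mul_inv, Matrix.one_mul]
  choose m hm_lt hm_ne using fun i =>
    exists_min_order fun hi => hdet.ne_zero (det_eq_zero_of_row_eq_zero i (congrFun hi))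
  obtain ⟨P, hP⟩ := exists_map_ofPowerSeries_eq
    (N := diagonal (fun i => HahnSeries.single (-m i) 1) * M) fun i j k hk => by
      rw [diagonal_mul, coeff_single_mul, one_mul]
      exact hm_lt i j _ (by omega)
  obtain ⟨T, hT⟩ := exists_map_ofPowerSeries_eq hint
  have hc_row (i : Fin 2) : (P.map constantCoeff) i ≠ 0 := by
    obtain ⟨j, hj⟩ := hm_ne i
    refine Function.ne_iff.mpr ⟨j, ?_⟩
    rwa [map_apply, constantCoeff_of_map_ofPowerSeries_eq hP, neg_neg]
  have hc : (P.map constantCoeff).det ≠ 0 :=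
    det_ne_zero_of_mul_eq_diagonal_mul (hc_row 0) (hc_row 1)
      (map_constantCoeff_mul_eq (mul_eq_diagonal_X_mul_map_powCoeffs hσ hMτ hP hT))
  have hP_unit : IsUnit P := by
    rw [isUnit_iff_isUnit_det]
    refine isUnit_of_isUnit_ofPowerSeries ?_ (by rwa [RingHom.map_det])
    rw [RingHom.map_det, RingHom.mapMatrix_apply, hP, det_mul, det_diagonal]
    exact (IsUnit.prod_univ_iff.mpr fun i => isUnit_single_one _).mul hdet
  refine ⟨m 0, m 1, hP_unit.unit, ?_⟩
  rw [hP_unit.unit_spec, hP]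
  congr 2
  ext i
  fin_cases i <;> rfl

/-- For `q = p^e` a prime power and `A` an integral domain containing `𝔽_q`,
if `g ∈ GL₂(A((z)))` is such that `g⁻¹·diag(z,1)·σ(g)` has all entries in `A[[z]]` and
determinant `z·u` with `u ∈ A[[z]]ˣ`, then there are integers `m, n` with
`diag(z^{-m}, z^{-n})·g ∈ GL₂(A[[z]])`. -/
theorem stmt_1 {p e q : ℕ} [Fact p.Prime] (hq : q = p ^ e) (he : 0 < e)
    {A : Type*} [CommRing A] [IsDomain A] [Algebra (GaloisField p e) A]
    (σ : LaurentSeries A →+* LaurentSeries A)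
    (hσ : ∀ (f : LaurentSeries A) (n : ℤ), (σ f).coeff n = f.coeff n ^ q)
    (g : (Matrix (Fin 2) (Fin 2) (LaurentSeries A))ˣ)
    (τ : Matrix (Fin 2) (Fin 2) (LaurentSeries A))
    (hτ : τ = (↑g⁻¹ : Matrix (Fin 2) (Fin 2) (LaurentSeries A)) *
        Matrix.diagonal ![(HahnSeries.single (1 : ℤ) (1 : A) : LaurentSeries A), 1] *
        ((↑g : Matrix (Fin 2) (Fin 2) (LaurentSeries A)).map ⇑σ))
    (hint : ∀ (i j : Fin 2) (n : ℤ), n < 0 → (τ i j).coeff n = 0)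
    (hdet : ∃ u : (PowerSeries A)ˣ,
      τ.det = (HahnSeries.single (1 : ℤ) (1 : A) : LaurentSeries A) *
        HahnSeries.ofPowerSeries ℤ A ↑u) :
    ∃ m n : ℤ, ∃ G : (Matrix (Fin 2) (Fin 2) (PowerSeries A))ˣ,
      Matrix.diagonal ![(HahnSeries.single (-m) (1 : A) : LaurentSeries A),
          (HahnSeries.single (-n) (1 : A) : LaurentSeries A)] *
          (↑g : Matrix (Fin 2) (Fin 2) (LaurentSeries A)) =
        (↑G : Matrix (Fin 2) (Fin 2) (PowerSeries A)).map ⇑(HahnSeries.ofPowerSeries ℤ A) :=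
  stmt_1_general σ hσ g τ hτ hint
end

section
/- Let q = p^e be a prime power and k a field containing 𝔽_q. Suppose g ∈ GL₂(k((z))) satisfies: (i) all entries of g⁻¹·diag(z,1)·σ(g) lie in k[[z]]; and (ii) det(g⁻¹·diag(z,1)·σ(g)) = z·u for some unit u of k[[z]]. Then there exists a UNIQUE pair of integers (m, n) such that diag(z^{-m}, z^{-n})·g ∈ GL₂(k[[z]]). -/
/-! Let `m, n` be the orders of the two rows of `g` (the least order of an entry) and `L` the
matrix of their leading coefficients. Since `τ` is integral, comparing coefficients of order `m`
and `n` in `g τ = diag(z, 1) σ(g)` gives `L₀ τ(0) = 0` and `L₁ τ(0) = L₁^(q)` for the rows of `L`.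
A dependence `L₁ = c L₀` would force `L₁^(q) = 0`, so `L` is invertible, and then
`diag(z^{-m}, z^{-n}) g` is integral with invertible constant term. Conversely, the constant term
of a matrix in `GL₂(k[[z]])` has no zero row, which pins any admissible pair down to the row
orders `(m, n)`. -/

open HahnSeries Matrix

theorem HahnSeries.coeff_mul_add_of_lt_eq_zero {Γ R : Type*} [AddCommMonoid Γ] [LinearOrder Γ]
    [IsOrderedCancelAddMonoid Γ] [NonUnitalNonAssocSemiring R] {x y : R⟦Γ⟧} {a b : Γ}
    (hx : ∀ c < a, x.coeff c = 0) (hy : ∀ c < b, y.coeff c = 0) :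
    (x * y).coeff (a + b) = x.coeff a * y.coeff b := by
  rw [coeff_mul, Finset.sum_eq_single (a, b)]
  · rintro ⟨c, d⟩ hcd hne
    obtain ⟨hc, hd, hsum⟩ := Finset.mem_antidiagonal.1 hcd
    have hac : a ≤ c := not_lt.1 fun h => hc (hx c h)
    have hbd : b ≤ d := not_lt.1 fun h => hd (hy d h)
    obtain ⟨rfl, rfl⟩ := (add_eq_add_iff_eq_and_eq hac hbd).1 hsum.symm
    exact absurd rfl hne
  · intro hab
    by_cases ha : x.coeff a = 0
    · rw [ha, zero_mul]
    · rw [not_ne_iff.1 fun hb => hab (Finset.mem_antidiagonal.2 ⟨ha, hb, rfl⟩), mul_zero]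

theorem Matrix.row_ne_zero_of_isUnit {n R : Type*} [Fintype n] [DecidableEq n] [CommRing R]
    [Nontrivial R] {A : Matrix n n R} (hA : IsUnit A) (i : n) : A i ≠ 0 := fun h =>
  ((isUnit_iff_isUnit_det A).1 hA).ne_zero (det_eq_zero_of_row_eq_zero i fun j => congrFun h j)

theorem PowerSeries.isUnit_of_isUnit_map_constantCoeff {n R : Type*} [Fintype n]
    [DecidableEq n] [CommRing R] {P : Matrix n n (PowerSeries R)}
    (h : IsUnit (P.map PowerSeries.constantCoeff)) : IsUnit P := by
  rw [isUnit_iff_isUnit_det, PowerSeries.isUnit_iff_constantCoeff, RingHom.map_det]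
  rwa [← isUnit_iff_isUnit_det]

theorem linearIndependent_pair_of_vecMul_eq_pow {K ι : Type*} [Field K] [Fintype ι]
    {a c : ι → K} {T : Matrix ι ι K} {q : ℕ} (ha : a ≠ 0) (hc : c ≠ 0) (haT : a ᵥ* T = 0)
    (hcT : c ᵥ* T = c ^ q) : LinearIndependent K ![a, c] := by
  refine LinearIndependent.pair_iff.2 fun s t hst => ?_
  have ht : t = 0 := by
    have h := congrArg (· ᵥ* T) hst
    simp only [add_vecMul, smul_vecMul, haT, hcT, smul_zero, zero_add, zero_vecMul] at h
    exact (smul_eq_zero.1 h).resolve_right fun hcq => hc (eq_zero_of_pow_eq_zero hcq)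
  subst ht
  simpa [ha] using hst

namespace LaurentSeries

variable {R ι : Type*}

theorem coeff_vecMul_of_lt_eq_zero [Semiring R] {κ : Type*} [Fintype ι]
    {v : ι → LaurentSeries R} {T : Matrix ι κ (LaurentSeries R)} {m : ℤ}
    (hv : ∀ j, ∀ a < m, (v j).coeff a = 0) (hT : ∀ i l, ∀ b < 0, (T i l).coeff b = 0) (l : κ) :
    ((v ᵥ* T) l).coeff m = ((fun j => (v j).coeff m) ᵥ* T.map fun x => x.coeff 0) l := by
  simp only [vecMul, dotProduct, coeff_sum, map_apply]
  refine Finset.sum_congr rfl fun j _ => ?_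
  simpa using coeff_mul_add_of_lt_eq_zero (hv j) (hT j l)

def powerSeriesPartAt [Semiring R] (x : LaurentSeries R) (m : ℤ) : PowerSeries R :=
  PowerSeries.mk fun t => x.coeff (t + m)

theorem constantCoeff_powerSeriesPartAt [Semiring R] (x : LaurentSeries R) (m : ℤ) :
    PowerSeries.constantCoeff (x.powerSeriesPartAt m) = x.coeff m := by
  simp [powerSeriesPartAt, ← PowerSeries.coeff_zero_eq_constantCoeff_apply]

theorem ofPowerSeries_powerSeriesPartAt [Semiring R] {x : LaurentSeries R} {m : ℤ}
    (hx : ∀ a < m, x.coeff a = 0) :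
    ofPowerSeries ℤ R (x.powerSeriesPartAt m) = single (-m) 1 * x := by
  ext t
  rw [coeff_single_mul, one_mul, sub_neg_eq_add, PowerSeries.coeff_coe]
  split_ifs with ht
  · exact (hx _ (by omega)).symm
  · simp [powerSeriesPartAt, Int.natAbs_of_nonneg (not_lt.1 ht)]

theorem coeff_add_eq_of_single_neg_mul_eq [Semiring R] {x : LaurentSeries R}
    {f : PowerSeries R} {m : ℤ} (h : single (-m) 1 * x = ofPowerSeries ℤ R f) (t : ℤ) :
    x.coeff (t + m) = (ofPowerSeries ℤ R f).coeff t := by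
  rw [← h, coeff_single_mul, one_mul, sub_neg_eq_add]

def IsMinOrder [Semiring R] (v : ι → LaurentSeries R) (m : ℤ) : Prop :=
  (∀ j, ∀ a < m, (v j).coeff a = 0) ∧ ∃ j, (v j).coeff m ≠ 0

theorem IsMinOrder.unique [Semiring R] {v : ι → LaurentSeries R} {m n : ℤ}
    (hm : IsMinOrder v m) (hn : IsMinOrder v n) : m = n := by
  by_contra hmn
  rcases Ne.lt_or_gt hmn with h | h
  · obtain ⟨j, hj⟩ := hm.2
    exact hj (hn.1 j m h)
  · obtain ⟨j, hj⟩ := hn.2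
    exact hj (hm.1 j n h)

theorem exists_isMinOrder [Semiring R] [Fintype ι] {v : ι → LaurentSeries R} (hv : v ≠ 0) :
    ∃ m, IsMinOrder v m := by
  classical
  set S := ⋃ j, (v j).support
  have hS : S.IsWF := by
    simpa [Finset.sup_set_eq_biUnion] using
      (Finset.isWF_sup Finset.univ (f := fun j => (v j).support)).2 fun j _ => (v j).isWF_support
  obtain ⟨j, hj⟩ := Function.ne_iff.1 hv
  have hne : S.Nonempty := ⟨_, Set.mem_iUnion.2 ⟨j, (support_nonempty_iff.2 hj).some_mem⟩⟩
  refine ⟨hS.min hne, fun j a ha => ?_, ?_⟩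
  · by_contra h
    exact hS.not_lt_min hne (Set.mem_iUnion.2 ⟨j, h⟩) ha
  · simpa [S] using hS.min_mem hne

section Matrix

variable [Fintype ι] [DecidableEq ι]

theorem diagonal_mul_eq_map_powerSeriesPartAt [Semiring R] {g : Matrix ι ι (LaurentSeries R)}
    {d : ι → ℤ} (hg : ∀ i j, ∀ a < d i, (g i j).coeff a = 0) :
    diagonal (fun i => single (-d i) 1) * g =
      (of fun i j => (g i j).powerSeriesPartAt (d i)).map (ofPowerSeries ℤ R) := by
  ext1 i j
  rw [diagonal_mul, map_apply, of_apply, ofPowerSeries_powerSeriesPartAt (hg i j)]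

theorem exists_diagonal_mul_eq_map_of_isUnit [CommRing R] {g : Matrix ι ι (LaurentSeries R)}
    {d : ι → ℤ} (hg : ∀ i j, ∀ a < d i, (g i j).coeff a = 0)
    (hL : IsUnit (of fun i j => (g i j).coeff (d i))) :
    ∃ G : (Matrix ι ι (PowerSeries R))ˣ, diagonal (fun i => single (-d i) 1) * g =
      (G : Matrix ι ι (PowerSeries R)).map (ofPowerSeries ℤ R) := by
  have hP : IsUnit (of fun i j => (g i j).powerSeriesPartAt (d i)) := by
    refine PowerSeries.isUnit_of_isUnit_map_constantCoeff ?_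
    convert hL using 2
    ext i j
    exact constantCoeff_powerSeriesPartAt _ _
  exact ⟨hP.unit, diagonal_mul_eq_map_powerSeriesPartAt hg⟩

theorem isMinOrder_of_diagonal_mul_eq [CommRing R] [Nontrivial R]
    {g : Matrix ι ι (LaurentSeries R)} {P : Matrix ι ι (PowerSeries R)} (hP : IsUnit P)
    {d : ι → ℤ} (h : diagonal (fun i => single (-d i) 1) * g = P.map (ofPowerSeries ℤ R))
    (i : ι) : IsMinOrder (g i) (d i) := by
  have hcoeff : ∀ j t, (g i j).coeff (t + d i) = (ofPowerSeries ℤ R (P i j)).coeff t := fun j =>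
    coeff_add_eq_of_single_neg_mul_eq (by simpa [diagonal_mul] using congrFun (congrFun h i) j)
  have hP₀ : IsUnit (P.map PowerSeries.constantCoeff) :=
    hP.map (PowerSeries.constantCoeff (R := R)).mapMatrix
  obtain ⟨j, hj⟩ := Function.ne_iff.1 (row_ne_zero_of_isUnit hP₀ i)
  refine ⟨fun j a ha => ?_, j, ?_⟩
  · simpa [PowerSeries.coeff_coe, ha] using hcoeff j (a - d i)
  · rw [← zero_add (d i), hcoeff]
    simpa [PowerSeries.coeff_coe] using hj

end Matrix

theorem isUnit_leadingCoeffs {k : Type*} [Field k] {q : ℕ} (hq : q ≠ 0)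
    {σ : LaurentSeries k →+* LaurentSeries k} (hσ : ∀ f n, (σ f).coeff n = f.coeff n ^ q)
    {g τ : Matrix (Fin 2) (Fin 2) (LaurentSeries k)} (hτ : ∀ i j, ∀ n < 0, (τ i j).coeff n = 0)
    (hgτ : g * τ = diagonal ![single 1 1, 1] * g.map σ) {d : Fin 2 → ℤ}
    (hd : ∀ i, IsMinOrder (g i) (d i)) :
    IsUnit (of fun i j => (g i j).coeff (d i)) := by
  set L := of fun i j => (g i j).coeff (d i)
  set τ₀ := τ.map fun x => x.coeff 0
  have hrow : ∀ i l, (L i ᵥ* τ₀) l = ((g * τ) i l).coeff (d i) := fun i l =>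
    (coeff_vecMul_of_lt_eq_zero (hd i).1 hτ l).symm
  have hL₀ : L 0 ᵥ* τ₀ = 0 := by
    funext l
    rw [hrow, hgτ, diagonal_mul, map_apply]
    simp [coeff_single_mul, hσ, (hd 0).1 l _ (sub_one_lt _), zero_pow hq]
  have hL₁ : L 1 ᵥ* τ₀ = L 1 ^ q := by
    funext l
    rw [hrow, hgτ, diagonal_mul, map_apply]
    simp [hσ, L]
  have hne : ∀ i, L i ≠ 0 := fun i hi => by
    obtain ⟨j, hj⟩ := (hd i).2
    exact hj (congrFun hi j)
  rw [← linearIndependent_rows_iff_isUnit]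
  convert linearIndependent_pair_of_vecMul_eq_pow (hne 0) (hne 1) hL₀ hL₁
  ext i
  fin_cases i <;> rfl

end LaurentSeries

open LaurentSeries

theorem stmt_4_general {q : ℕ}
    {k : Type*} [Field k]
    (σ : LaurentSeries k →+* LaurentSeries k)
    (hσ : ∀ (f : LaurentSeries k) (n : ℤ), (σ f).coeff n = f.coeff n ^ q)
    (g : (Matrix (Fin 2) (Fin 2) (LaurentSeries k))ˣ)
    (τ : Matrix (Fin 2) (Fin 2) (LaurentSeries k))
    (hτ : τ = (↑g⁻¹ : Matrix (Fin 2) (Fin 2) (LaurentSeries k)) *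
        Matrix.diagonal ![(HahnSeries.single (1 : ℤ) (1 : k) : LaurentSeries k), 1] *
        ((↑g : Matrix (Fin 2) (Fin 2) (LaurentSeries k)).map ⇑σ))
    (hint : ∀ (i j : Fin 2) (n : ℤ), n < 0 → (τ i j).coeff n = 0) :
    ∃! mn : ℤ × ℤ, ∃ G : (Matrix (Fin 2) (Fin 2) (PowerSeries k))ˣ,
      Matrix.diagonal ![(HahnSeries.single (-mn.1) (1 : k) : LaurentSeries k),
          (HahnSeries.single (-mn.2) (1 : k) : LaurentSeries k)] *
          (↑g : Matrix (Fin 2) (Fin 2) (LaurentSeries k)) =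
        (↑G : Matrix (Fin 2) (Fin 2) (PowerSeries k)).map ⇑(HahnSeries.ofPowerSeries ℤ k) := by
  -- for `q = 0` every coefficient of `σ 0 = 0` would be `0 ^ 0 = 1`
  have hq : q ≠ 0 := by
    rintro rfl
    simpa using hσ 0 0
  choose d hd using fun i => exists_isMinOrder (row_ne_zero_of_isUnit g.isUnit i)
  have hgτ : (g : Matrix (Fin 2) (Fin 2) (LaurentSeries k)) * τ =
      diagonal ![single 1 1, 1] * (g : Matrix (Fin 2) (Fin 2) (LaurentSeries k)).map σ := by
    rw [hτ, ← Matrix.mul_assoc, ← Matrix.mul_assoc, g.mul_inv, Matrix.one_mul]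
  have hdiag : ∀ a b : ℤ, ![(single (-a) 1 : LaurentSeries k), single (-b) 1] =
      fun i => single (-(![a, b] i)) 1 := fun a b => by
    funext i
    fin_cases i <;> rfl
  have hd' : ![d 0, d 1] = d := by
    funext i
    fin_cases i <;> rfl
  refine ⟨(d 0, d 1), ?_, ?_⟩
  · dsimp only
    rw [hdiag, hd']
    exact exists_diagonal_mul_eq_map_of_isUnit (fun i => (hd i).1)
      (isUnit_leadingCoeffs hq hσ hint hgτ hd)
  · rintro ⟨m, n⟩ ⟨G, hG⟩
    dsimp only at hG
    rw [hdiag] at hG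
    have hmn := isMinOrder_of_diagonal_mul_eq G.isUnit hG
    exact Prod.ext ((hmn 0).unique (hd 0)) ((hmn 1).unique (hd 1))

/-- For `q = p^e` a prime power and `k` a field containing `𝔽_q`,
if `g ∈ GL₂(k((z)))` is such that `g⁻¹·diag(z,1)·σ(g)` has all entries in `k[[z]]` and
determinant `z·u` with `u ∈ k[[z]]ˣ`, then there is a UNIQUE pair of integers `(m, n)` with
`diag(z^{-m}, z^{-n})·g ∈ GL₂(k[[z]])`. -/
theorem stmt_4 {p e q : ℕ} [Fact p.Prime] (hq : q = p ^ e) (he : 0 < e)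
    {k : Type*} [Field k] [Algebra (GaloisField p e) k]
    (σ : LaurentSeries k →+* LaurentSeries k)
    (hσ : ∀ (f : LaurentSeries k) (n : ℤ), (σ f).coeff n = f.coeff n ^ q)
    (g : (Matrix (Fin 2) (Fin 2) (LaurentSeries k))ˣ)
    (τ : Matrix (Fin 2) (Fin 2) (LaurentSeries k))
    (hτ : τ = (↑g⁻¹ : Matrix (Fin 2) (Fin 2) (LaurentSeries k)) *
        Matrix.diagonal ![(HahnSeries.single (1 : ℤ) (1 : k) : LaurentSeries k), 1] *
        ((↑g : Matrix (Fin 2) (Fin 2) (LaurentSeries k)).map ⇑σ))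
    (hint : ∀ (i j : Fin 2) (n : ℤ), n < 0 → (τ i j).coeff n = 0)
    (hdet : ∃ u : (PowerSeries k)ˣ,
      τ.det = (HahnSeries.single (1 : ℤ) (1 : k) : LaurentSeries k) *
        HahnSeries.ofPowerSeries ℤ k ↑u) :
    ∃! mn : ℤ × ℤ, ∃ G : (Matrix (Fin 2) (Fin 2) (PowerSeries k))ˣ,
      Matrix.diagonal ![(HahnSeries.single (-mn.1) (1 : k) : LaurentSeries k),
          (HahnSeries.single (-mn.2) (1 : k) : LaurentSeries k)] *
          (↑g : Matrix (Fin 2) (Fin 2) (LaurentSeries k)) =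
        (↑G : Matrix (Fin 2) (Fin 2) (PowerSeries k)).map ⇑(HahnSeries.ofPowerSeries ℤ k) :=
  stmt_4_general σ hσ g τ hτ hint
end

section
/- Let q be a prime power and 𝔽_q[[ζ]] the formal power series ring, equipped with its coefficientwise (ζ-adic) topology. For every integer k ≥ 1, the family of power series (ζ^{∑_{i∈s} q^i}), indexed by the k-element finite subsets s of ℕ, is summable in 𝔽_q[[ζ]], and the order (the ζ-adic valuation, i.e. the index of the lowest nonzero coefficient) of its sum equals 1 + q + ⋯ + q^{k-1} = (q^k − 1)/(q − 1). -/
/-!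
For `q ≥ 2`, uniqueness of base-`q` expansions makes `s ↦ ∑ i ∈ s, q ^ i` injective, so the
family consists of distinct monomials and sums coefficientwise to the series whose coefficients
are the indicator of the set of exponents. Its order is the least exponent, attained at
`s = {0, …, k - 1}`, since the `j`-th smallest element of a `k`-set is at least `j`.
-/

open PowerSeries PowerSeries.WithPiTopology

theorem Finset.sum_range_card_le_sum_of_monotone {M : Type*} [AddCommMonoid M] [PartialOrder M]
    [IsOrderedAddMonoid M] {f : ℕ → M} (hf : Monotone f) (s : Finset ℕ) :
    ∑ i ∈ range s.card, f i ≤ ∑ i ∈ s, f i := by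
  induction s using Finset.induction_on_max with
  | empty => simp
  | insert a s hlt ih =>
    have has : a ∉ s := fun h => (hlt a h).false
    have hcard : s.card ≤ a := by
      simpa using card_le_card fun x hx => mem_range.2 (hlt x hx)
    rw [card_insert_of_notMem has, sum_range_succ, sum_insert has, add_comm (f a)]
    exact add_le_add ih (hf hcard)

namespace PowerSeries

variable {R : Type*} [Semiring R]

theorem order_mk_indicator_one [Nontrivial R] {S : Set ℕ} {m : ℕ} (hm : IsLeast S m) :
    order (mk (S.indicator 1) : R⟦X⟧) = m := by
  refine order_eq_nat.2 ⟨?_, fun i hi => ?_⟩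
  · simp [coeff_mk, Set.indicator_of_mem hm.1]
  · rw [coeff_mk, Set.indicator_of_notMem fun h => (hm.2 h).not_gt hi]

theorem hasSum_X_pow_of_injective [TopologicalSpace R] {ι : Type*} {n : ι → ℕ}
    (hn : Function.Injective n) :
    HasSum (fun i => (X : R⟦X⟧) ^ n i) (mk ((Set.range n).indicator 1)) := by
  classical
  refine (hasSum_iff_hasSum_coeff R).2 fun d => ?_
  simp only [coeff_X_pow, coeff_mk]
  by_cases hd : d ∈ Set.range n
  · obtain ⟨i, rfl⟩ := hd
    rw [Set.indicator_of_mem (Set.mem_range_self i), Pi.one_apply]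
    convert hasSum_ite_eq i (1 : R) using 2 with j
    simp only [hn.eq_iff, eq_comm]
  · rw [Set.indicator_of_notMem hd]
    convert hasSum_zero with j
    exact if_neg fun h => hd ⟨j, h.symm⟩

end PowerSeries

theorem stmt_9_general {p e q : ℕ} [Fact p.Prime] (hq : q = p ^ e) (he : 0 < e)
    (k : ℕ) :
    letI : TopologicalSpace (GaloisField p e) := ⊥
    letI : TopologicalSpace (PowerSeries (GaloisField p e)) := Pi.topologicalSpace
    Summable (fun s : {s : Finset ℕ // s.card = k} =>
        (PowerSeries.X : PowerSeries (GaloisField p e)) ^ (∑ i ∈ s.1, q ^ i)) ∧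
      PowerSeries.order (∑' s : {s : Finset ℕ // s.card = k},
          (PowerSeries.X : PowerSeries (GaloisField p e)) ^ (∑ i ∈ s.1, q ^ i)) =
        (∑ i ∈ Finset.range k, q ^ i : ℕ) ∧
      (∑ i ∈ Finset.range k, q ^ i : ℕ) = (q ^ k - 1) / (q - 1) := by
  let _ : TopologicalSpace (GaloisField p e) := ⊥
  have : DiscreteTopology (GaloisField p e) := ⟨rfl⟩
  have hq2 : 2 ≤ q := hq ▸ Nat.one_lt_pow he.ne' (Fact.out : p.Prime).one_lt
  have hsum := hasSum_X_pow_of_injective (R := GaloisField p e)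
    ((Finset.geomSum_injective hq2).comp (Subtype.val_injective (p := fun s => s.card = k)))
  have hleast : IsLeast (Set.range fun s : {s : Finset ℕ // s.card = k} => ∑ i ∈ s.1, q ^ i)
      (∑ i ∈ Finset.range k, q ^ i) := by
    refine ⟨⟨⟨Finset.range k, Finset.card_range k⟩, rfl⟩, ?_⟩
    rintro _ ⟨⟨s, rfl⟩, rfl⟩
    exact s.sum_range_card_le_sum_of_monotone (pow_right_mono₀ (one_le_two.trans hq2))
  exact ⟨hsum.summable, hsum.tsum_eq ▸ order_mk_indicator_one hleast, Nat.geomSum_eq hq2 k⟩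

/-- Let `q = p^e` be a prime power and equip `𝔽_q[[ζ]]` with its coefficientwise
topology (coefficients discrete). For every `k ≥ 1` the family `(ζ^{∑_{i∈s} q^i})`, indexed by
the `k`-element finite subsets `s ⊆ ℕ`, is summable, and the order (ζ-adic valuation) of its
sum equals `1 + q + ⋯ + q^{k-1} = (q^k − 1)/(q − 1)`. -/
theorem stmt_9 {p e q : ℕ} [Fact p.Prime] (hq : q = p ^ e) (he : 0 < e)
    (k : ℕ) (hk : 1 ≤ k) :
    letI : TopologicalSpace (GaloisField p e) := ⊥
    letI : TopologicalSpace (PowerSeries (GaloisField p e)) := Pi.topologicalSpace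
    Summable (fun s : {s : Finset ℕ // s.card = k} =>
        (PowerSeries.X : PowerSeries (GaloisField p e)) ^ (∑ i ∈ s.1, q ^ i)) ∧
      PowerSeries.order (∑' s : {s : Finset ℕ // s.card = k},
          (PowerSeries.X : PowerSeries (GaloisField p e)) ^ (∑ i ∈ s.1, q ^ i)) =
        (∑ i ∈ Finset.range k, q ^ i : ℕ) ∧
      (∑ i ∈ Finset.range k, q ^ i : ℕ) = (q ^ k - 1) / (q - 1) :=
  stmt_9_general hq he k
end

section
/- Let q be a prime power and consider the power series ring 𝔽_q[[ζ]][[w]] with its coefficientwise topology. The family (1 − ζ^{q^i}·w)_{i ≥ 0} is multipliable in 𝔽_q[[ζ]][[w]]; denoting its product by P and by P^σ the image of P under the continuous ring endomorphism of 𝔽_q[[ζ]][[w]] sending ζ to ζ^q and fixing w, one has P = (1 − ζw)·P^σ. -/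
/-!
Since `ζ ^ q ^ i` has `ζ`-adic order `q ^ i → ∞`, the coefficient of `ζ ^ m * w ^ d` in a finite
product `∏ i ∈ s, ζ ^ q ^ i * w` vanishes unless every `q ^ i` with `i ∈ s` is at most `m`;
so the expansion `∏ (1 + x i) = ∑ s, ∏ i ∈ s, x i` converges coefficientwise. The functional
equation is the shift `σ (1 - ζ ^ q ^ i * w) = 1 - ζ ^ q ^ (i + 1) * w`, carried through the
infinite product by the continuity of `σ`.
-/

open Filter Topology PowerSeries

namespace PowerSeries.WithPiTopology

theorem multipliable_one_add_C_mul_X {R : Type*} [CommSemiring R] [TopologicalSpace R]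
    {ι : Type*} [LinearOrder ι] [LocallyFiniteOrderBot ι] {a : ι → R⟦X⟧}
    (h : Tendsto (fun i ↦ (a i).order) atTop (𝓝 ⊤)) :
    Multipliable (fun i ↦ (1 : R⟦X⟧⟦X⟧) + C (a i) * X) := by
  rcases isEmpty_or_nonempty ι with hempty | hnonempty
  · exact multipliable_of_hasFiniteMulSupport (Set.toFinite _)
  refine multipliable_one_add_of_summable_prod <| (summable_iff_summable_coeff _).mpr fun d ↦
    (summable_iff_summable_coeff _).mpr fun m ↦ summable_of_hasFiniteSupport ?_
  simp_rw [ENat.tendsto_nhds_top_iff_natCast_lt, eventually_atTop] at h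
  obtain ⟨i, hi⟩ := h m
  apply (Finset.Iio i).powerset.finite_toSet.subset
  suffices ∀ s : Finset ι, coeff m (coeff d (∏ i ∈ s, C (a i) * X)) ≠ 0 → ↑s ⊆ Set.Iio i by
    simpa
  intro s hs
  contrapose hs
  obtain ⟨x, hxs, hxi⟩ := Set.not_subset.mp hs
  rw [Set.mem_Iio, not_lt] at hxi
  rw [Finset.prod_mul_distrib, ← map_prod, coeff_C_mul]
  refine coeff_of_lt_order _ <| (hi x hxi).trans_le <| le_trans ?_ (le_order_mul _ _)
  exact (Finset.single_le_sum (by simp) hxs).trans ((le_order_prod _ _).trans le_self_add)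

theorem multipliable_one_sub_C_X_pow_pow_mul_X {R : Type*} [CommRing R] [TopologicalSpace R]
    {q : ℕ} (hq : 1 < q) :
    Multipliable (fun i : ℕ ↦ (1 : R⟦X⟧⟦X⟧) - C (X ^ q ^ i) * X) := by
  nontriviality R
  simp_rw [sub_eq_add_neg, ← neg_mul, ← map_neg]
  apply multipliable_one_add_C_mul_X
  simp_rw [order_neg, order_X_pow]
  exact ENat.tendsto_natCast_nhds_top.comp (tendsto_pow_atTop_atTop_of_one_lt hq)

end PowerSeries.WithPiTopology

open PowerSeries.WithPiTopology

theorem Multipliable.tprod_eq_zero_mul_map_tprod {M F : Type*} [CommMonoid M]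
    [TopologicalSpace M] [T2Space M] [ContinuousMul M] [FunLike F M M] [MonoidHomClass F M M]
    {f : ℕ → M} (hf : Multipliable f) {σ : F} (hσ : Continuous σ)
    (hshift : ∀ i, σ (f i) = f (i + 1)) :
    ∏' i, f i = f 0 * σ (∏' i, f i) := by
  have hf_succ : Multipliable fun i ↦ f (i + 1) := by
    simpa [Function.comp_def, hshift] using hf.map σ hσ
  rw [hf.map_tprod σ hσ]
  simp only [hshift]
  exact tprod_eq_zero_mul' hf_succ

/-- Let `q = p^e` be a prime power and equip `𝔽_q[[ζ]][[w]]` with its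
coefficientwise topology. The family `(1 − ζ^{q^i}·w)_{i ≥ 0}` is multipliable; denoting its
product by `P` and by `P^σ` its image under a continuous ring endomorphism `σ` of
`𝔽_q[[ζ]][[w]]` sending `ζ` to `ζ^q` and fixing `w`, one has `P = (1 − ζw)·P^σ`. -/
theorem stmt_11 {p e q : ℕ} [Fact p.Prime] (hq : q = p ^ e) (he : 0 < e) :
    letI : TopologicalSpace (GaloisField p e) := ⊥
    letI : TopologicalSpace (PowerSeries (GaloisField p e)) := Pi.topologicalSpace
    letI : TopologicalSpace (PowerSeries (PowerSeries (GaloisField p e))) := Pi.topologicalSpace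
    ∀ σ : PowerSeries (PowerSeries (GaloisField p e)) →+*
        PowerSeries (PowerSeries (GaloisField p e)),
      Continuous σ →
      σ (PowerSeries.C (R := PowerSeries (GaloisField p e)) PowerSeries.X) =
        PowerSeries.C (R := PowerSeries (GaloisField p e)) (PowerSeries.X ^ q) →
      σ PowerSeries.X = PowerSeries.X →
      Multipliable (fun i : ℕ =>
          1 - PowerSeries.C (R := PowerSeries (GaloisField p e)) (PowerSeries.X ^ q ^ i) *
            PowerSeries.X) ∧
        (∏' i : ℕ, (1 - PowerSeries.C (R := PowerSeries (GaloisField p e)) (PowerSeries.X ^ q ^ i) *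
            PowerSeries.X)) =
          (1 - PowerSeries.C (R := PowerSeries (GaloisField p e)) PowerSeries.X * PowerSeries.X) *
            σ (∏' i : ℕ, (1 - PowerSeries.C (R := PowerSeries (GaloisField p e))
                (PowerSeries.X ^ q ^ i) * PowerSeries.X)) := by
  let : TopologicalSpace (GaloisField p e) := ⊥
  have : DiscreteTopology (GaloisField p e) := ⟨rfl⟩
  intro σ hcont hC hX
  have hq1 : 1 < q := hq ▸ Nat.one_lt_pow he.ne' (Fact.out : p.Prime).one_lt
  have hmul := multipliable_one_sub_C_X_pow_pow_mul_X (R := GaloisField p e) hq1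
  refine ⟨hmul, ?_⟩
  have hshift : ∀ i : ℕ, σ (1 - C (X ^ q ^ i) * X) = 1 - C (X ^ q ^ (i + 1)) * X := by
    intro i
    rw [map_sub, map_one, map_mul, hX, map_pow, map_pow, hC, ← map_pow, ← pow_mul, ← pow_succ']
  have h := hmul.tprod_eq_zero_mul_map_tprod hcont hshift
  rwa [pow_zero, pow_one] at h
end

section
/- Let q = p^e be a prime power and K = 𝔽_q(ζ) the field of rational functions over 𝔽_q. Define e₀ = 1, e_n = ∏_{i=0}^{n-1}(ζ^{q^n} − ζ^{q^i})⁻¹ and c₀ = 1, c_n = ∏_{i=1}^{n}(ζ − ζ^{q^i})⁻¹ in K. Then the formal power series E = ∑_{n≥0} e_n X^{q^n} and L = ∑_{n≥0} c_n X^{q^n} in K[[X]] (both with zero constant term and linear coefficient 1) are compositional inverses of each other: substituting L into E gives X, and substituting E into L gives X. -/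
/-- Composition (substitution) of formal power series: `(psComp f g) = f ∘ g`, defined
coefficientwise; it agrees with substituting `g` into `f` whenever `g` has zero constant term
(in that case `coeff m (g^n) = 0` for `n > m`, so the truncated sum is the full one). -/
noncomputable def psComp {K : Type*} [CommRing K] (f g : PowerSeries K) : PowerSeries K :=
  PowerSeries.mk fun m => ∑ n ∈ Finset.range (m + 1),
    PowerSeries.coeff n f * PowerSeries.coeff m (g ^ n)

/-- `e_n = ∏_{i=0}^{n-1} (ζ^{q^n} − ζ^{q^i})⁻¹ ∈ K = 𝔽_q(ζ)` (so `e₀ = 1`), `ζ = RatFunc.X`. -/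
noncomputable def carlitzExpCoeff (p e : ℕ) [Fact p.Prime] (q n : ℕ) :
    RatFunc (GaloisField p e) :=
  ∏ i ∈ Finset.range n,
    ((RatFunc.X : RatFunc (GaloisField p e)) ^ q ^ n - RatFunc.X ^ q ^ i)⁻¹

/-- `c_n = ∏_{i=1}^{n} (ζ − ζ^{q^i})⁻¹ ∈ K = 𝔽_q(ζ)` (so `c₀ = 1`), `ζ = RatFunc.X`. -/
noncomputable def carlitzLogCoeff (p e : ℕ) [Fact p.Prime] (q n : ℕ) :
    RatFunc (GaloisField p e) :=
  ∏ i ∈ Finset.Icc 1 n,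
    ((RatFunc.X : RatFunc (GaloisField p e)) - RatFunc.X ^ q ^ i)⁻¹

open scoped Classical in
/-- The Carlitz exponential `E = ∑_{n≥0} e_n X^{q^n}` as a formal power series over `𝔽_q(ζ)`. -/
noncomputable def carlitzExp (p e : ℕ) [Fact p.Prime] (q : ℕ) :
    PowerSeries (RatFunc (GaloisField p e)) :=
  PowerSeries.mk fun m =>
    if h : ∃ n, m = q ^ n then carlitzExpCoeff p e q h.choose else 0

open scoped Classical in
/-- The Carlitz logarithm `L = ∑_{n≥0} c_n X^{q^n}` as a formal power series over `𝔽_q(ζ)`. -/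
noncomputable def carlitzLog (p e : ℕ) [Fact p.Prime] (q : ℕ) :
    PowerSeries (RatFunc (GaloisField p e)) :=
  PowerSeries.mk fun m =>
    if h : ∃ n, m = q ^ n then carlitzLogCoeff p e q h.choose else 0

/-!
Both series are `q`-linear (supported on the exponents `q^n`), and in characteristic `p` the
coefficients of `f ^ q^i` are those of `f` raised to the power `q^i` and moved to exponents
multiplied by `q^i`. Hence substituting `∑ b_n X^{q^n}` into `∑ a_n X^{q^n}` gives the
`q`-linear series with coefficients `∑_{i+j=k} a_i b_j^{q^i}`. With `D_n = ζ^{q^n}`, the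
recurrences `e_{n+1} (D_{n+1} - D_0) = e_n^q` and `c_{n+1} (D_0 - D_{n+1}) = c_n` let one
multiply the `(k+1)`-st coefficient by `D_{k+1} - D_0 = (D_{k+1} - D_i) + (D_i - D_0)` and
telescope: for `E ∘ L` the coefficients `A_k` satisfy `A_{k+1} (D_{k+1} - D_0) = A_k^q - A_k`,
and for `L ∘ E` the right-hand side is `0`. Since `D_{k+1} ≠ D_0` and `A_0 = 1`, both
sequences are `1, 0, 0, …`.
-/

open PowerSeries Finset

section Frobenius

variable {K : Type*} [CommRing K] {p : ℕ} [ExpChar K p]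

theorem PowerSeries.coeff_pow_expChar_pow (f : K⟦X⟧) (n m : ℕ) :
    coeff m (f ^ p ^ n) = if p ^ n ∣ m then coeff (m / p ^ n) f ^ p ^ n else 0 := by
  have hp : p ≠ 0 := expChar_ne_zero K p
  rw [← MvPowerSeries.map_iterateFrobenius_expand p hp f n]
  change coeff m (map (iterateFrobenius K p n) (expand (p ^ n) (pow_ne_zero n hp) f)) = _
  rw [coeff_map, coeff_expand]
  split_ifs
  · rfl
  · exact map_zero _

variable {e q : ℕ}

theorem PowerSeries.coeff_pow_pow_of_eq_expChar_pow (hq : q = p ^ e) (f : K⟦X⟧) (i m : ℕ) :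
    coeff m (f ^ q ^ i) = if q ^ i ∣ m then coeff (m / q ^ i) f ^ q ^ i else 0 := by
  rw [hq, ← pow_mul, coeff_pow_expChar_pow]

theorem sub_pow_pow_of_eq_expChar_pow (hq : q = p ^ e) (x y : K) (i : ℕ) :
    (x - y) ^ q ^ i = x ^ q ^ i - y ^ q ^ i := by
  rw [hq, ← pow_mul, sub_pow_expChar_pow]

theorem sum_pow_of_eq_expChar_pow {ι : Type*} (hq : q = p ^ e) (s : Finset ι) (f : ι → K) :
    (∑ i ∈ s, f i) ^ q = ∑ i ∈ s, f i ^ q := by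
  rw [hq, sum_pow_char_pow]

end Frobenius

section QLinear

variable {K : Type*} [CommRing K]

open scoped Classical in
noncomputable def qLinear (q : ℕ) (a : ℕ → K) : K⟦X⟧ :=
  mk fun m => if h : ∃ n, m = q ^ n then a h.choose else 0

/-- The coefficients of the composition of two `q`-linear series (`psComp_qLinear`); this is the
multiplication of the skew power series ring `K⟦τ⟧` with `τ a = a ^ q τ`. -/
noncomputable def frobConv (q : ℕ) (a b : ℕ → K) (k : ℕ) : K :=
  ∑ x ∈ antidiagonal k, a x.1 * b x.2 ^ q ^ x.1

variable {q : ℕ} (a b : ℕ → K)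

theorem frobConv_zero : frobConv q a b 0 = a 0 * b 0 := by
  simp [frobConv]

theorem coeff_qLinear_pow (hq : 1 < q) (k : ℕ) : coeff (q ^ k) (qLinear q a) = a k := by
  have h : ∃ n, q ^ k = q ^ n := ⟨k, rfl⟩
  rw [qLinear, coeff_mk, dif_pos h, ← Nat.pow_right_injective hq h.choose_spec]

theorem coeff_qLinear_of_forall_ne {m : ℕ} (hm : ∀ n, m ≠ q ^ n) :
    coeff m (qLinear q a) = 0 := by
  rw [qLinear, coeff_mk, dif_neg (not_exists.mpr hm)]

theorem qLinear_single_zero (hq : 1 < q) : qLinear q (Pi.single 0 1 : ℕ → K) = X := by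
  ext m
  rw [coeff_X]
  by_cases hm : ∃ n, m = q ^ n
  · obtain ⟨n, rfl⟩ := hm
    rw [coeff_qLinear_pow _ hq]
    rcases eq_or_ne n 0 with rfl | hn
    · simp
    · rw [Pi.single_eq_of_ne hn, if_neg (Nat.one_lt_pow hn hq).ne']
  · rw [coeff_qLinear_of_forall_ne _ (not_exists.mp hm), if_neg fun h => hm ⟨0, by simp [h]⟩]

variable {p e : ℕ} [ExpChar K p]

theorem coeff_qLinear_pow_pow (hq : q = p ^ e) (hq1 : 1 < q) (i j : ℕ) :
    coeff (q ^ (i + j)) (qLinear q b ^ q ^ i) = b j ^ q ^ i := by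
  rw [coeff_pow_pow_of_eq_expChar_pow hq, pow_add, if_pos (dvd_mul_right _ _),
    Nat.mul_div_cancel_left _ (by positivity), coeff_qLinear_pow _ hq1]

theorem coeff_qLinear_pow_pow_of_forall_ne (hq : q = p ^ e) (hq1 : 1 < q) {i m : ℕ}
    (hm : ∀ j, m ≠ q ^ (i + j)) : coeff m (qLinear q b ^ q ^ i) = 0 := by
  rw [coeff_pow_pow_of_eq_expChar_pow hq]
  split_ifs with hd
  · obtain ⟨t, rfl⟩ := hd
    have ht : ∀ j, t ≠ q ^ j := fun j hj => hm j (by rw [hj, pow_add])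
    rw [Nat.mul_div_cancel_left _ (by positivity), coeff_qLinear_of_forall_ne _ ht,
      zero_pow (by positivity)]
  · rfl

theorem coeff_pow_psComp_qLinear (hq : q = p ^ e) (hq1 : 1 < q) (k : ℕ) :
    coeff (q ^ k) (psComp (qLinear q a) (qLinear q b)) = frobConv q a b k := by
  set h := fun n => coeff n (qLinear q a) * coeff (q ^ k) (qLinear q b ^ n)
  have hinj : Set.InjOn (fun x : ℕ × ℕ => q ^ x.1) (antidiagonal k) := fun x hx y hy hxy =>
    (HasAntidiagonal.antidiagonal_congr hx hy).mpr (Nat.pow_right_injective hq1 hxy)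
  have hsub : (antidiagonal k).image (fun x => q ^ x.1) ⊆ range (q ^ k + 1) := by
    intro n hn
    obtain ⟨x, hx, rfl⟩ := mem_image.mp hn
    exact mem_range_succ_iff.mpr
      (Nat.pow_le_pow_right (by omega) (Finset.HasAntidiagonal.antidiagonal.fst_le hx))
  have hvan : ∀ n ∈ range (q ^ k + 1),
      n ∉ (antidiagonal k).image (fun x => q ^ x.1) → h n = 0 := by
    intro n _ hni
    by_cases hn : ∃ i, n = q ^ i
    · obtain ⟨i, rfl⟩ := hn
      have hki : k < i := by
        by_contra! hik
        exact hni (mem_image.mpr ⟨(i, k - i), by simp [hik], rfl⟩)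
      refine mul_eq_zero_of_right _ (coeff_qLinear_pow_pow_of_forall_ne b hq hq1 fun j hj => ?_)
      have := Nat.pow_right_injective hq1 hj
      omega
    · exact mul_eq_zero_of_left (coeff_qLinear_of_forall_ne _ (not_exists.mp hn)) _
  calc coeff (q ^ k) (psComp (qLinear q a) (qLinear q b))
      = ∑ n ∈ (antidiagonal k).image (fun x => q ^ x.1), h n := by
        rw [psComp, coeff_mk, sum_subset hsub hvan]
    _ = ∑ x ∈ antidiagonal k, h (q ^ x.1) := sum_image hinj
    _ = frobConv q a b k := by
      refine sum_congr rfl fun ⟨i, j⟩ hij => ?_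
      obtain rfl : i + j = k := HasAntidiagonal.mem_antidiagonal.mp hij
      simp only [h, coeff_qLinear_pow _ hq1, coeff_qLinear_pow_pow b hq hq1]

theorem coeff_psComp_qLinear_of_forall_ne (hq : q = p ^ e) (hq1 : 1 < q) {m : ℕ}
    (hm : ∀ k, m ≠ q ^ k) : coeff m (psComp (qLinear q a) (qLinear q b)) = 0 := by
  rw [psComp, coeff_mk]
  refine sum_eq_zero fun n _ => ?_
  by_cases hn : ∃ i, n = q ^ i
  · obtain ⟨i, rfl⟩ := hn
    rw [coeff_qLinear_pow_pow_of_forall_ne b hq hq1 fun j => hm (i + j), mul_zero]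
  · rw [coeff_qLinear_of_forall_ne _ (not_exists.mp hn), zero_mul]

theorem psComp_qLinear (hq : q = p ^ e) (hq1 : 1 < q) :
    psComp (qLinear q a) (qLinear q b) = qLinear q (frobConv q a b) := by
  ext m
  by_cases hm : ∃ k, m = q ^ k
  · obtain ⟨k, rfl⟩ := hm
    rw [coeff_pow_psComp_qLinear a b hq hq1, coeff_qLinear_pow _ hq1]
  · rw [coeff_psComp_qLinear_of_forall_ne a b hq hq1 (not_exists.mp hm),
      coeff_qLinear_of_forall_ne _ (not_exists.mp hm)]

end QLinear

section FrobConv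

variable {K : Type*} [CommRing K]

-- The term of index `(i, j)` is multiplied by `(D (k + 1) - D i) + (D i - D 0)`.
theorem sum_antidiagonal_succ_mul_sub (f : ℕ × ℕ → K) (D : ℕ → K) (k : ℕ) :
    (∑ x ∈ antidiagonal (k + 1), f x) * (D (k + 1) - D 0) =
      ∑ x ∈ antidiagonal k, (f (x.1, x.2 + 1) * (D (x.1 + x.2 + 1) - D x.1) +
        f (x.1 + 1, x.2) * (D (x.1 + 1) - D 0)) := by
  have hsplit : ∀ x : ℕ × ℕ,
      f x * (D (k + 1) - D 0) = f x * (D (k + 1) - D x.1) + f x * (D x.1 - D 0) :=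
    fun x => by ring
  rw [sum_mul, sum_congr rfl fun x _ => hsplit x, sum_add_distrib, Nat.sum_antidiagonal_succ',
    Nat.sum_antidiagonal_succ, sum_add_distrib]
  simp only [sub_self, mul_zero, zero_add]
  congr 1
  refine sum_congr rfl fun x hx => ?_
  rw [← HasAntidiagonal.mem_antidiagonal.mp hx]

variable {p e q : ℕ} [ExpChar K p] {θ : K} {a c : ℕ → K}

theorem frobConv_succ_mul_sub_of_exp_log (hq : q = p ^ e)
    (ha : ∀ n, a (n + 1) * (θ ^ q ^ (n + 1) - θ) = a n ^ q)
    (hc : ∀ n, c (n + 1) * (θ - θ ^ q ^ (n + 1)) = c n) (k : ℕ) :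
    frobConv q a c (k + 1) * (θ ^ q ^ (k + 1) - θ) = frobConv q a c k ^ q - frobConv q a c k := by
  have hD := sum_antidiagonal_succ_mul_sub (fun x => a x.1 * c x.2 ^ q ^ x.1) (θ ^ q ^ ·) k
  simp only [pow_zero, pow_one] at hD
  rw [frobConv, hD, frobConv, sum_pow_of_eq_expChar_pow hq, ← sum_sub_distrib]
  refine sum_congr rfl fun ⟨i, j⟩ _ => ?_
  have hc' := congrArg (· ^ q ^ i) (hc j)
  simp only [mul_pow, sub_pow_pow_of_eq_expChar_pow hq] at hc'
  linear_combination -a i * hc' + c j ^ q ^ (i + 1) * ha i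

theorem frobConv_succ_mul_sub_of_log_exp (hq : q = p ^ e)
    (ha : ∀ n, a (n + 1) * (θ ^ q ^ (n + 1) - θ) = a n ^ q)
    (hc : ∀ n, c (n + 1) * (θ - θ ^ q ^ (n + 1)) = c n) (k : ℕ) :
    frobConv q c a (k + 1) * (θ ^ q ^ (k + 1) - θ) = 0 := by
  have hD := sum_antidiagonal_succ_mul_sub (fun x => c x.1 * a x.2 ^ q ^ x.1) (θ ^ q ^ ·) k
  simp only [pow_zero, pow_one] at hD
  rw [frobConv, hD]
  refine sum_eq_zero fun ⟨i, j⟩ _ => ?_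
  have ha' := congrArg (· ^ q ^ i) (ha j)
  simp only [mul_pow, sub_pow_pow_of_eq_expChar_pow hq] at ha'
  linear_combination c i * ha' - a j ^ q ^ (i + 1) * hc i

variable [IsDomain K]

theorem frobConv_exp_log_eq_single (hq : q = p ^ e) (hθ : ∀ n, θ ^ q ^ (n + 1) ≠ θ)
    (ha0 : a 0 = 1) (ha : ∀ n, a (n + 1) * (θ ^ q ^ (n + 1) - θ) = a n ^ q)
    (hc0 : c 0 = 1) (hc : ∀ n, c (n + 1) * (θ - θ ^ q ^ (n + 1)) = c n) :
    frobConv q a c = Pi.single 0 1 := by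
  have hq0 : q ≠ 0 := hq ▸ pow_ne_zero e (expChar_ne_zero K p)
  have hcancel : ∀ k {x : K}, x * (θ ^ q ^ (k + 1) - θ) = 0 → x = 0 :=
    fun k _ h => (mul_eq_zero.mp h).resolve_right (sub_ne_zero.mpr (hθ k))
  have hsucc : ∀ k, frobConv q a c (k + 1) = 0 := by
    intro k
    induction k with
    | zero => exact hcancel 0 (by
        rw [frobConv_succ_mul_sub_of_exp_log hq ha hc, frobConv_zero, ha0, hc0]; ring)
    | succ k ih => exact hcancel (k + 1) (by
        rw [frobConv_succ_mul_sub_of_exp_log hq ha hc, ih, zero_pow hq0, sub_zero])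
  funext k
  cases k with
  | zero => rw [frobConv_zero, ha0, hc0]; simp
  | succ k => rw [hsucc, Pi.single_eq_of_ne k.succ_ne_zero]

theorem frobConv_log_exp_eq_single (hq : q = p ^ e) (hθ : ∀ n, θ ^ q ^ (n + 1) ≠ θ)
    (ha0 : a 0 = 1) (ha : ∀ n, a (n + 1) * (θ ^ q ^ (n + 1) - θ) = a n ^ q)
    (hc0 : c 0 = 1) (hc : ∀ n, c (n + 1) * (θ - θ ^ q ^ (n + 1)) = c n) :
    frobConv q c a = Pi.single 0 1 := by
  funext k
  cases k with
  | zero => rw [frobConv_zero, ha0, hc0]; simp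
  | succ k =>
    rw [Pi.single_eq_of_ne k.succ_ne_zero]
    exact (mul_eq_zero.mp (frobConv_succ_mul_sub_of_log_exp hq ha hc k)).resolve_right
      (sub_ne_zero.mpr (hθ k))

end FrobConv

theorem RatFunc.X_pow_injective {F : Type*} [Field F] :
    Function.Injective ((RatFunc.X : RatFunc F) ^ · : ℕ → RatFunc F) := by
  intro m n h
  have hpoly : (Polynomial.X : Polynomial F) ^ m = Polynomial.X ^ n :=
    RatFunc.algebraMap_injective F (by simpa using h)
  simpa using congrArg Polynomial.natDegree hpoly

section Carlitz

variable {p e q : ℕ} [Fact p.Prime]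

theorem carlitzExp_eq_qLinear : carlitzExp p e q = qLinear q (carlitzExpCoeff p e q) := rfl

theorem carlitzLog_eq_qLinear : carlitzLog p e q = qLinear q (carlitzLogCoeff p e q) := rfl

theorem carlitzExpCoeff_zero : carlitzExpCoeff p e q 0 = 1 := by
  simp [carlitzExpCoeff]

theorem carlitzLogCoeff_zero : carlitzLogCoeff p e q 0 = 1 := by
  simp [carlitzLogCoeff]

theorem carlitzExpCoeff_succ (hq : q = p ^ e) (n : ℕ) :
    carlitzExpCoeff p e q (n + 1) =
      carlitzExpCoeff p e q n ^ q / (RatFunc.X ^ q ^ (n + 1) - RatFunc.X) := by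
  rw [carlitzExpCoeff, carlitzExpCoeff, prod_range_succ', ← prod_pow, div_eq_mul_inv, pow_zero,
    pow_one]
  congr 1
  refine prod_congr rfl fun i _ => ?_
  rw [inv_pow, ← pow_one q, sub_pow_pow_of_eq_expChar_pow hq, pow_one, ← pow_mul, ← pow_mul,
    ← pow_succ, ← pow_succ]

theorem carlitzLogCoeff_succ (n : ℕ) :
    carlitzLogCoeff p e q (n + 1) =
      carlitzLogCoeff p e q n / (RatFunc.X - RatFunc.X ^ q ^ (n + 1)) := by
  rw [carlitzLogCoeff, carlitzLogCoeff, prod_Icc_succ_top (Nat.le_add_left 1 n), div_eq_mul_inv]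

end Carlitz

/-- Over `K = 𝔽_q(ζ)`, the Carlitz exponential `E = ∑ e_n X^{q^n}` and the
Carlitz logarithm `L = ∑ c_n X^{q^n}` are compositional inverses of each other:
substituting `L` into `E` gives `X`, and substituting `E` into `L` gives `X`. -/
theorem stmt_13 {p e q : ℕ} [Fact p.Prime] (hq : q = p ^ e) (he : 0 < e) :
    psComp (carlitzExp p e q) (carlitzLog p e q) =
        (PowerSeries.X : PowerSeries (RatFunc (GaloisField p e))) ∧
      psComp (carlitzLog p e q) (carlitzExp p e q) =
        (PowerSeries.X : PowerSeries (RatFunc (GaloisField p e))) := by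
  have hq1 : 1 < q := hq ▸ Nat.one_lt_pow he.ne' (Fact.out : p.Prime).one_lt
  have hθ : ∀ n, (RatFunc.X : RatFunc (GaloisField p e)) ^ q ^ (n + 1) ≠ RatFunc.X :=
    fun n h => (Nat.one_lt_pow n.succ_ne_zero hq1).ne'
      (RatFunc.X_pow_injective (h.trans (pow_one _).symm))
  have ha n : carlitzExpCoeff p e q (n + 1) * (RatFunc.X ^ q ^ (n + 1) - RatFunc.X) =
      carlitzExpCoeff p e q n ^ q := by
    rw [carlitzExpCoeff_succ hq, div_mul_cancel₀ _ (sub_ne_zero.mpr (hθ n))]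
  have hc n : carlitzLogCoeff p e q (n + 1) * (RatFunc.X - RatFunc.X ^ q ^ (n + 1)) =
      carlitzLogCoeff p e q n := by
    rw [carlitzLogCoeff_succ, div_mul_cancel₀ _ (sub_ne_zero.mpr (hθ n).symm)]
  rw [carlitzExp_eq_qLinear, carlitzLog_eq_qLinear, psComp_qLinear _ _ hq hq1,
    psComp_qLinear _ _ hq hq1,
    frobConv_exp_log_eq_single hq hθ carlitzExpCoeff_zero ha carlitzLogCoeff_zero hc,
    frobConv_log_exp_eq_single hq hθ carlitzExpCoeff_zero ha carlitzLogCoeff_zero hc,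
    qLinear_single_zero hq1]
  exact ⟨rfl, rfl⟩
end
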